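/- arXiv:1007.0711 — 6 statements merged into one kernel-verified Lean document; each statement's English description precedes it below -/
import Mathlib

section
/- Let n ≥ 1 and let g : ℝ^n → ℝ satisfy g(λx + (1−λ)x') = λ g(x) + (1−λ) g(x') for every λ ∈ [0,1] and all comonotonic vectors x, x' ∈ ℝ^n. Then for every permutation π of [n] there exist a ∈ ℝ^n and c ∈ ℝ with g(x) = Σ_{i=1}^n a_i x_i + c for all x ∈ P_π; that is, g is a Lovász extension. -/
open Finset

/-- The Choquet-type sum computed with a given permutation `π`:
`∑ i (v({π(i),…,π(n)}) − v({π(i+1),…,π(n)})) x_{π(i)}`. -/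
noncomputable def choquetSum {n : ℕ} (v : Finset (Fin n) → ℝ) (π : Equiv.Perm (Fin n))
    (x : Fin n → ℝ) : ℝ :=
  ∑ i : Fin n,
    (v ((Finset.univ.filter fun k => i ≤ k).image π) -
      v ((Finset.univ.filter fun k => i < k).image π)) * x (π i)

/-- The signed (discrete) Choquet integral of `x` w.r.t. the set function `v`,
computed with a sorting permutation of `x`. -/
noncomputable def signedChoquet {n : ℕ} (v : Finset (Fin n) → ℝ) (x : Fin n → ℝ) : ℝ :=
  choquetSum v (Tuple.sort x) x

/-- Two vectors are comonotonic. -/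
def Comonotone' {n : ℕ} (x x' : Fin n → ℝ) : Prop :=
  ∀ i j, 0 ≤ (x i - x j) * (x' i - x' j)

/-- Characteristic (indicator) vector of `S`. -/
def indVec {n : ℕ} (S : Finset (Fin n)) : Fin n → ℝ := fun i => if i ∈ S then 1 else 0

/-- The unanimity game `v_S`. -/
def unanimity {n : ℕ} (S T : Finset (Fin n)) : ℝ := if S ⊆ T then 1 else 0

/-- The Möbius transform of a set function. -/
noncomputable def mobius {n : ℕ} (v : Finset (Fin n) → ℝ) (S : Finset (Fin n)) : ℝ :=
  ∑ T ∈ S.powerset, (-1 : ℝ) ^ (S.card - T.card) * v T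

/-!
On the cone `P_π` comonotonicity is automatic, so `h := g - g 0` is additive there (take
`λ = 1/2` at `2x, 2y`) and positively homogeneous (compare with the constant `0`, which is
comonotonic with everything). Every vector is a difference of two vectors of `P_π`, so
`h (p - q) := h p - h q` extends `h` to a linear functional on `ℝⁿ`.
-/

section LinearExtension

variable {𝕜 V W : Type*} [Field 𝕜] [LinearOrder 𝕜] [IsStrictOrderedRing 𝕜]
  [AddCommGroup V] [Module 𝕜 V] [AddCommGroup W] [Module 𝕜 W]

/-- The extension is `p - q ↦ f p - f q`; additivity of `f` on `C` makes it well defined. -/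
theorem PointedCone.exists_linearMap_eqOn (C : PointedCone 𝕜 V)
    (hC : ∀ v, ∃ p ∈ C, ∃ q ∈ C, v = p - q) (f : V → W)
    (hadd : ∀ x ∈ C, ∀ y ∈ C, f (x + y) = f x + f y)
    (hsmul : ∀ s : 𝕜, 0 ≤ s → ∀ x ∈ C, f (s • x) = s • f x) :
    ∃ L : V →ₗ[𝕜] W, ∀ x ∈ C, L x = f x := by
  choose p hp q hq hpq using hC
  have hwellDef : ∀ v, ∀ a ∈ C, ∀ b ∈ C, v = a - b → f (p v) - f (q v) = f a - f b := by
    intro v a ha b hb hv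
    have hsum : p v + b = a + q v := by rw [← sub_eq_sub_iff_add_eq_add, ← hpq, hv]
    have := congrArg f hsum
    rw [hadd _ (hp v) _ hb, hadd _ ha _ (hq v)] at this
    rw [sub_eq_sub_iff_add_eq_add, this]
  refine ⟨{ toFun := fun v => f (p v) - f (q v), map_add' := ?_, map_smul' := ?_ }, ?_⟩
  · intro v w
    rw [hwellDef (v + w) _ (C.add_mem (hp v) (hp w)) _ (C.add_mem (hq v) (hq w))
      (by rw [add_sub_add_comm, ← hpq, ← hpq]), hadd _ (hp v) _ (hp w), hadd _ (hq v) _ (hq w)]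
    abel
  · intro s v
    rcases le_or_gt 0 s with hs | hs
    · rw [hwellDef (s • v) _ (C.smul_mem hs (hp v)) _ (C.smul_mem hs (hq v))
        (by rw [← smul_sub, ← hpq]), hsmul s hs _ (hp v), hsmul s hs _ (hq v), smul_sub]
      rfl
    · have hs' : 0 ≤ -s := by linarith
      rw [hwellDef (s • v) _ (C.smul_mem hs' (hq v)) _ (C.smul_mem hs' (hp v))
        (by rw [← smul_sub, neg_smul, ← smul_neg, neg_sub, ← hpq]),
        hsmul (-s) hs' _ (hq v), hsmul (-s) hs' _ (hp v), neg_smul, neg_smul, smul_sub]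
      simp only [RingHom.id_apply]
      abel
  · intro x hx
    have hf0 : f 0 = 0 := by simpa using hsmul 0 le_rfl 0 C.zero_mem
    simp only [LinearMap.coe_mk, AddHom.coe_mk]
    rw [hwellDef x x hx 0 C.zero_mem (sub_zero x).symm, hf0, sub_zero]

end LinearExtension

/-- The ordering cone `P_π`. -/
def orderCone {ι : Type*} [Preorder ι] (π : Equiv.Perm ι) : PointedCone ℝ (ι → ℝ) where
  carrier := {x | Monotone fun i => x (π i)}
  add_mem' hx hy := hx.add hy
  zero_mem' := monotone_const
  smul_mem' s _ hx := hx.const_mul s.2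

theorem mem_orderCone {ι : Type*} [Preorder ι] {π : Equiv.Perm ι} {x : ι → ℝ} :
    x ∈ orderCone π ↔ Monotone fun i => x (π i) :=
  Iff.rfl

theorem exists_mem_orderCone_eq_sub {ι : Type*} [LinearOrder ι] [Finite ι]
    (π : Equiv.Perm ι) (v : ι → ℝ) :
    ∃ p ∈ orderCone π, ∃ q ∈ orderCone π, v = p - q := by
  obtain ⟨p, q, hp, hq, hpq⟩ := (BoundedVariationOn.of_finite (fun i => v (π i))
    Set.univ).locallyBoundedVariationOn.exists_monotoneOn_sub_monotoneOn
  refine ⟨fun i => p (π.symm i), ?_, fun i => q (π.symm i), ?_, ?_⟩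
  · simpa [mem_orderCone] using monotoneOn_univ.mp hp
  · simpa [mem_orderCone] using monotoneOn_univ.mp hq
  · ext i
    simpa using congrFun hpq (π.symm i)

theorem comonotone_of_mem_orderCone {n : ℕ} {π : Equiv.Perm (Fin n)} {x y : Fin n → ℝ}
    (hx : x ∈ orderCone π) (hy : y ∈ orderCone π) : Comonotone' x y := by
  have hle : ∀ {i j}, π.symm i ≤ π.symm j → 0 ≤ (x i - x j) * (y i - y j) := fun hij => by
    have hxij := hx hij
    have hyij := hy hij
    simp only [Equiv.apply_symm_apply] at hxij hyij
    exact mul_nonneg_of_nonpos_of_nonpos (by linarith) (by linarith)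
  intro i j
  rcases le_total (π.symm i) (π.symm j) with hij | hji
  · exact hle hij
  · rw [← neg_mul_neg, neg_sub, neg_sub]
    exact hle hji

theorem comonotone_zero_right {n : ℕ} (x : Fin n → ℝ) : Comonotone' x 0 := by
  simp [Comonotone']

theorem Comonotone'.smul {n : ℕ} {x y : Fin n → ℝ} (h : Comonotone' x y) (s : ℝ) :
    Comonotone' (s • x) (s • y) := fun i j => by
  simpa only [Pi.smul_apply, smul_eq_mul, ← mul_sub, mul_mul_mul_comm] using
    mul_nonneg (mul_self_nonneg s) (h i j)

def AffineOnComonotone {n : ℕ} (g : (Fin n → ℝ) → ℝ) : Prop :=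
  ∀ x x' : Fin n → ℝ, Comonotone' x x' → ∀ t : ℝ, 0 ≤ t → t ≤ 1 →
    g (fun i => t * x i + (1 - t) * x' i) = t * g x + (1 - t) * g x'

namespace AffineOnComonotone

variable {n : ℕ} {g : (Fin n → ℝ) → ℝ}

theorem map_smul (hg : AffineOnComonotone g) (x : Fin n → ℝ) {s : ℝ} (hs : 0 ≤ s) :
    g (s • x) = s * g x + (1 - s) * g 0 := by
  rcases le_or_gt s 1 with hs1 | hs1
  · have := hg x 0 (comonotone_zero_right x) s hs hs1
    simp only [Pi.zero_apply, mul_zero, add_zero] at this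
    exact this
  · have hs0 : 0 < s := by linarith
    have := hg (s • x) 0 (comonotone_zero_right _) s⁻¹ (inv_nonneg.mpr hs)
      (inv_le_one_of_one_le₀ hs1.le)
    simp only [Pi.smul_apply, smul_eq_mul, ← mul_assoc, inv_mul_cancel₀ hs0.ne', one_mul,
      Pi.zero_apply, mul_zero, add_zero] at this
    field_simp at this
    linarith

theorem map_add (hg : AffineOnComonotone g) {x y : Fin n → ℝ} (hxy : Comonotone' x y) :
    g (x + y) = g x + g y - g 0 := by
  have := hg _ _ (hxy.smul 2) (1 / 2) (by norm_num) (by norm_num)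
  rw [hg.map_smul x zero_le_two, hg.map_smul y zero_le_two] at this
  have hmid : (fun i => 1 / 2 * ((2 : ℝ) • x) i + (1 - 1 / 2) * ((2 : ℝ) • y) i) = x + y := by
    ext i; simp only [Pi.smul_apply, smul_eq_mul, Pi.add_apply]; ring
  rw [hmid] at this
  linarith

end AffineOnComonotone

theorem piecewiseAffine_of_affineComb_general {n : ℕ}
    (g : (Fin n → ℝ) → ℝ)
    (hcomb : ∀ x x' : Fin n → ℝ, Comonotone' x x' →
      ∀ t : ℝ, 0 ≤ t → t ≤ 1 →
        g (fun i => t * x i + (1 - t) * x' i) = t * g x + (1 - t) * g x') :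
    ∀ π : Equiv.Perm (Fin n), ∃ (a : Fin n → ℝ) (c : ℝ),
      ∀ x : Fin n → ℝ, (Monotone fun i => x (π i)) →
        g x = ∑ i : Fin n, a i * x i + c := by
  have hg : AffineOnComonotone g := hcomb
  intro π
  obtain ⟨L, hL⟩ := (orderCone π).exists_linearMap_eqOn (exists_mem_orderCone_eq_sub π)
    (fun x => g x - g 0)
    (fun x hx y hy => by
      simp only [hg.map_add (comonotone_of_mem_orderCone hx hy)]; ring)
    (fun s hs x _ => by simp only [hg.map_smul x hs, smul_eq_mul]; ring)
  refine ⟨fun i => L fun j => if i = j then 1 else 0, g 0, fun x hx => ?_⟩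
  rw [← sub_eq_iff_eq_add, ← hL x hx, LinearMap.pi_apply_eq_sum_univ L x]
  simp only [smul_eq_mul, mul_comm]

/-- A function satisfying the affine-combination identity on
comonotonic vectors is affine on every ordering cone `P_π`, i.e., is a
Lovász extension. -/
theorem piecewiseAffine_of_affineComb {n : ℕ} (hn : 1 ≤ n)
    (g : (Fin n → ℝ) → ℝ)
    (hcomb : ∀ x x' : Fin n → ℝ, Comonotone' x x' →
      ∀ t : ℝ, 0 ≤ t → t ≤ 1 →
        g (fun i => t * x i + (1 - t) * x' i) = t * g x + (1 - t) * g x') :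
    ∀ π : Equiv.Perm (Fin n), ∃ (a : Fin n → ℝ) (c : ℝ),
      ∀ x : Fin n → ℝ, (Monotone fun i => x (π i)) →
        g x = ∑ i : Fin n, a i * x i + c :=
  piecewiseAffine_of_affineComb_general g hcomb
end

section
/- Let n ≥ 1 and let g : ℝ^n → ℝ satisfy g(0) = 0 and g(λx + (1−λ)x') = λ g(x) + (1−λ) g(x') for every λ ∈ [0,1] and all comonotonic vectors x, x' ∈ ℝ^n. Then g = C_v, the signed Choquet integral with respect to the signed capacity v on [n] defined by v(S) = g(1_S), where 1_S is the characteristic vector of S. -/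
open Finset

/-!
Once a permutation `π` sorting `x` is fixed, all vectors `z` with `z ∘ π` monotone are pairwise
comonotonic, so on them `g` is additive and positively homogeneous; moreover `g` commutes with adding
constants. The layer-cake decomposition
`x = x (π 0) • 1 + ∑ₖ (x (π (k + 1)) - x (π k)) • 1_{π {k+1, …, n-1}}`
has nonnegative increments, so it expresses `g x` through the values `v (π {k, …, n-1})`, and Abel
summation turns this expression into the Choquet sum.
-/

section Comonotone

variable {n : ℕ}

lemma comonotone'_smul_one (x : Fin n → ℝ) (c : ℝ) : Comonotone' x (c • 1) := by
  intro i j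
  simp

lemma comonotone'_of_monotone_comp {x y : Fin n → ℝ} (π : Equiv.Perm (Fin n))
    (hx : Monotone (x ∘ π)) (hy : Monotone (y ∘ π)) : Comonotone' x y := by
  intro i j
  obtain ⟨p, rfl⟩ := π.surjective i
  obtain ⟨q, rfl⟩ := π.surjective j
  rcases le_total p q with hpq | hqp
  · exact mul_nonneg_of_nonpos_of_nonpos (sub_nonpos.2 (hx hpq)) (sub_nonpos.2 (hy hpq))
  · exact mul_nonneg (sub_nonneg.2 (hx hqp)) (sub_nonneg.2 (hy hqp))

end Comonotone

def IsComonotoneAffine {n : ℕ} (g : (Fin n → ℝ) → ℝ) : Prop :=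
  ∀ x x' : Fin n → ℝ, Comonotone' x x' → ∀ t : ℝ, 0 ≤ t → t ≤ 1 →
    g (t • x + (1 - t) • x') = t * g x + (1 - t) * g x'

namespace IsComonotoneAffine

variable {n : ℕ} {g : (Fin n → ℝ) → ℝ}

lemma map_smul (hg : IsComonotoneAffine g) (h0 : g 0 = 0) (x : Fin n → ℝ) {t : ℝ}
    (ht : 0 ≤ t) : g (t • x) = t * g x := by
  have h_le_one : ∀ x : Fin n → ℝ, ∀ s : ℝ, 0 ≤ s → s ≤ 1 → g (s • x) = s * g x := by
    intro x s hs hs1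
    simpa [h0] using hg x 0 (by simpa using comonotone'_smul_one x 0) s hs hs1
  rcases le_or_gt t 1 with ht1 | ht1
  · exact h_le_one x t ht ht1
  · have ht0 : t ≠ 0 := by positivity
    have h := h_le_one (t • x) t⁻¹ (by positivity) (inv_le_one_of_one_le₀ ht1.le)
    rw [smul_smul, inv_mul_cancel₀ ht0, one_smul] at h
    rw [h, mul_inv_cancel_left₀ ht0]

lemma map_add (hg : IsComonotoneAffine g) (h0 : g 0 = 0) {x y : Fin n → ℝ}
    (hxy : Comonotone' x y) : g (x + y) = g x + g y := by
  have h := hg x y hxy (1 / 2) (by norm_num) (by norm_num)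
  rw [show (1 : ℝ) - 1 / 2 = 1 / 2 by norm_num, ← smul_add,
    hg.map_smul h0 (x + y) (by norm_num)] at h
  linarith

lemma map_add_smul_one (hg : IsComonotoneAffine g) (h0 : g 0 = 0) (x : Fin n → ℝ) (c : ℝ) :
    g (x + c • 1) = g x + c * g 1 := by
  rcases le_total 0 c with hc | hc
  · rw [hg.map_add h0 (comonotone'_smul_one x c), hg.map_smul h0 1 hc]
  · have h := hg.map_add h0 (comonotone'_smul_one (x + c • 1) (-c))
    rw [hg.map_smul h0 1 (neg_nonneg.2 hc), neg_smul, add_neg_cancel_right] at h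
    linarith

lemma map_sum (hg : IsComonotoneAffine g) (h0 : g 0 = 0) {ι : Type*}
    (π : Equiv.Perm (Fin n)) {w : ι → Fin n → ℝ} (hw : ∀ k, Monotone (w k ∘ π))
    (s : Finset ι) {d : ι → ℝ} (hd : ∀ k ∈ s, 0 ≤ d k) :
    g (∑ k ∈ s, d k • w k) = ∑ k ∈ s, d k * g (w k) := by
  classical
  induction s using Finset.induction_on with
  | empty => simpa using h0
  | insert a s ha ih =>
    have hsum : Monotone ((∑ k ∈ s, d k • w k) ∘ π) := fun p q hpq => by
      simpa only [Function.comp_apply, Finset.sum_apply, Pi.smul_apply, smul_eq_mul] using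
        sum_le_sum fun k hk =>
          mul_le_mul_of_nonneg_left (hw k hpq) (hd k (mem_insert_of_mem hk))
    have hda : Monotone ((d a • w a) ∘ π) := fun p q hpq =>
      mul_le_mul_of_nonneg_left (hw a hpq) (hd a (mem_insert_self a s))
    rw [sum_insert ha, sum_insert ha,
      hg.map_add h0 (comonotone'_of_monotone_comp π hda hsum),
      hg.map_smul h0 _ (hd a (mem_insert_self a s)),
      ih fun k hk => hd k (mem_insert_of_mem hk)]

end IsComonotoneAffine

lemma sum_range_ite_lt_sub (y : ℕ → ℝ) {p m : ℕ} (hpm : p ≤ m) :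
    ∑ k ∈ range m, (if k < p then y (k + 1) - y k else 0) = y p - y 0 := by
  rw [← sum_filter, show (range m).filter (· < p) = range p by ext; simp; omega, sum_range_sub]

lemma sum_range_succ_sub_mul (V y : ℕ → ℝ) (m : ℕ) :
    ∑ i ∈ range (m + 1), (V i - V (i + 1)) * y i =
      y 0 * V 0 + ∑ k ∈ range m, (y (k + 1) - y k) * V (k + 1) - y m * V (m + 1) := by
  induction m with
  | zero =>
    simp only [Nat.zero_add, sum_range_one, range_zero, sum_empty]
    ring
  | succ m ih =>
    rw [sum_range_succ, ih, sum_range_succ]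
    ring

section Layer

variable {n : ℕ}

lemma indVec_empty : indVec (∅ : Finset (Fin n)) = 0 := by
  funext i
  simp [indVec]

lemma indVec_univ : indVec (univ : Finset (Fin n)) = 1 := by
  funext i
  simp [indVec]

-- Indexed by `ℕ` rather than `Fin n`, so that `layer π n = ∅` is available.
def layer (π : Equiv.Perm (Fin n)) (k : ℕ) : Finset (Fin n) :=
  (univ.filter fun i : Fin n => k ≤ (i : ℕ)).image π

lemma layer_zero (π : Equiv.Perm (Fin n)) : layer π 0 = univ := by
  simp [layer]

lemma layer_self (π : Equiv.Perm (Fin n)) : layer π n = ∅ := by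
  simp [layer]

lemma indVec_layer_apply (π : Equiv.Perm (Fin n)) (k : ℕ) (p : Fin n) :
    indVec (layer π k) (π p) = if k ≤ (p : ℕ) then 1 else 0 := by
  simp [indVec, layer]

lemma monotone_indVec_layer_comp (π : Equiv.Perm (Fin n)) (k : ℕ) :
    Monotone (indVec (layer π k) ∘ π) := by
  intro p q hpq
  simp only [Function.comp_apply, indVec_layer_apply]
  split_ifs with hp hq <;> first | exact absurd (hp.trans hpq) hq | norm_num

lemma choquetSum_eq_sum_range (v : Finset (Fin n) → ℝ) (π : Equiv.Perm (Fin n))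
    {x : Fin n → ℝ} {y : ℕ → ℝ} (hy : ∀ p : Fin n, x (π p) = y p) :
    choquetSum v π x = ∑ i ∈ range n, (v (layer π i) - v (layer π (i + 1))) * y i := by
  rw [choquetSum, ← Fin.sum_univ_eq_sum_range]
  refine sum_congr rfl fun i _ => ?_
  rw [hy]
  -- `i ≤ k` and `i < k` on `Fin n` unfold to `↑i ≤ ↑k` and `↑i + 1 ≤ ↑k`.
  rfl

end Layer

lemma eq_smul_one_add_sum_layer {m : ℕ} (π : Equiv.Perm (Fin (m + 1))) {x : Fin (m + 1) → ℝ}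
    {y : ℕ → ℝ} (hy : ∀ p : Fin (m + 1), x (π p) = y p) :
    x = y 0 • 1 + ∑ k ∈ range m, (y (k + 1) - y k) • indVec (layer π (k + 1)) := by
  funext j
  obtain ⟨p, rfl⟩ := π.surjective j
  simp only [hy, Pi.add_apply, Pi.smul_apply, Pi.one_apply, smul_eq_mul, mul_one,
    Finset.sum_apply, indVec_layer_apply, Order.add_one_le_iff, mul_ite, mul_zero]
  rw [sum_range_ite_lt_sub y (by omega)]
  ring

lemma IsComonotoneAffine.eq_sum_layer {m : ℕ} {g : (Fin (m + 1) → ℝ) → ℝ}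
    (hg : IsComonotoneAffine g) (h0 : g 0 = 0) (π : Equiv.Perm (Fin (m + 1)))
    {x : Fin (m + 1) → ℝ} (hx : Monotone (x ∘ π)) {y : ℕ → ℝ}
    (hy : ∀ p : Fin (m + 1), x (π p) = y p) :
    g x = y 0 * g 1 + ∑ k ∈ range m, (y (k + 1) - y k) * g (indVec (layer π (k + 1))) := by
  have hy_mono : ∀ k < m, 0 ≤ y (k + 1) - y k := fun k hk => by
    rw [sub_nonneg, ← hy ⟨k, by omega⟩, ← hy ⟨k + 1, by omega⟩]
    exact hx (Fin.mk_le_mk.2 k.le_succ)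
  rw [eq_smul_one_add_sum_layer π hy, add_comm, hg.map_add_smul_one h0,
    hg.map_sum h0 π (fun k => monotone_indVec_layer_comp π (k + 1)) _
      fun k hk => hy_mono k (mem_range.1 hk), add_comm]

theorem eq_signedChoquet_of_affineComb_general {n : ℕ}
    (g : (Fin n → ℝ) → ℝ) (h0 : g 0 = 0)
    (hcomb : ∀ x x' : Fin n → ℝ, Comonotone' x x' →
      ∀ t : ℝ, 0 ≤ t → t ≤ 1 →
        g (fun i => t * x i + (1 - t) * x' i) = t * g x + (1 - t) * g x') :
    ∀ x : Fin n → ℝ, g x = signedChoquet (fun S => g (indVec S)) x := by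
  intro x
  cases n with
  | zero =>
    rw [Subsingleton.elim x 0, h0]
    simp [signedChoquet, choquetSum]
  | succ m =>
    have hg : IsComonotoneAffine g := hcomb
    set π := Tuple.sort x
    set y : ℕ → ℝ := fun k => x (π (Fin.ofNat (m + 1) k))
    have hy : ∀ p : Fin (m + 1), x (π p) = y p := fun p => by simp [y]
    have hv : g (indVec ∅) = 0 := by rw [indVec_empty, h0]
    rw [signedChoquet, choquetSum_eq_sum_range _ π hy, sum_range_succ_sub_mul, layer_zero,
      layer_self, hv, mul_zero, sub_zero,
      hg.eq_sum_layer h0 π (Tuple.monotone_sort x) hy, indVec_univ]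

/-- A function vanishing at the origin and satisfying the
affine-combination identity on comonotonic vectors is the signed Choquet
integral w.r.t. the signed capacity `S ↦ g(1_S)`. -/
theorem eq_signedChoquet_of_affineComb {n : ℕ} (hn : 1 ≤ n)
    (g : (Fin n → ℝ) → ℝ) (h0 : g 0 = 0)
    (hcomb : ∀ x x' : Fin n → ℝ, Comonotone' x x' →
      ∀ t : ℝ, 0 ≤ t → t ≤ 1 →
        g (fun i => t * x i + (1 - t) * x' i) = t * g x + (1 - t) * g x') :
    ∀ x : Fin n → ℝ, g x = signedChoquet (fun S => g (indVec S)) x :=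
  eq_signedChoquet_of_affineComb_general g h0 hcomb
end

section
/- Let n ≥ 1 and let h : ℝ^n → ℝ be comonotonically additive and continuous. Then h is positively homogeneous: h(r x) = r h(x) for every real r > 0 and every x ∈ ℝ^n. -/
open Finset

/-! Nonnegative multiples of one vector are pairwise comonotonic, so along each ray the map
`t ↦ h (t • x)` is additive on `[0, ∞)`. Being continuous, it is then linear there, as in
Cauchy's functional equation. -/

open scoped NNReal

theorem Continuous.eq_smul_apply_one_of_add_of_nonneg {F : Type*} [AddCommGroup F] [Module ℝ F]
    [TopologicalSpace F] [ContinuousSMul ℝ F] [T2Space F] {g : ℝ → F} (hg : Continuous g)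
    (hadd : ∀ s t, 0 ≤ s → 0 ≤ t → g (s + t) = g s + g t) {r : ℝ} (hr : 0 ≤ r) :
    g r = r • g 1 := by
  let φ : ℝ≥0 →+ F :=
    { toFun := fun t => g t
      map_zero' := by simpa using hadd 0 0 le_rfl le_rfl
      map_add' := fun s t => hadd s t s.2 t.2 }
  have hrat (q : ℚ) : g |(q : ℝ)| = |(q : ℝ)| • g 1 := by
    have habs : ((q.nnabs : ℚ≥0) : ℝ) = |(q : ℝ)| := by
      rw [← Rat.cast_nnratCast, Rat.coe_nnabs, Rat.cast_abs]
    have hφ := map_nnratCast_smul φ ℝ≥0 ℝ q.nnabs 1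
    rw [smul_eq_mul, mul_one] at hφ
    change g ((q.nnabs : ℚ≥0) : ℝ) = ((q.nnabs : ℚ≥0) : ℝ) • g 1 at hφ
    rwa [habs] at hφ
  -- Composing with `|·|` turns the identity on `[0, ∞)` into one on all of `ℝ`,
  -- so that density of `ℚ` in `ℝ` applies.
  have habs_eq : (fun t : ℝ => g |t|) = fun t => |t| • g 1 :=
    Rat.isDenseEmbedding_coe_real.dense.equalizer (by fun_prop) (by fun_prop) (funext hrat)
  simpa [abs_of_nonneg hr] using congr_fun habs_eq r

theorem comonotone'_smul_smul {n : ℕ} {c d : ℝ} (hc : 0 ≤ c) (hd : 0 ≤ d) (x : Fin n → ℝ) :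
    Comonotone' (c • x) (d • x) := fun i j => by
  have hsq : (c * x i - c * x j) * (d * x i - d * x j) = c * d * (x i - x j) ^ 2 := by ring
  simp only [Pi.smul_apply, smul_eq_mul, hsq]
  positivity

theorem comonotoneAdditive_continuous_posHom_general {n : ℕ}
    (h : (Fin n → ℝ) → ℝ)
    (hadd : ∀ x x' : Fin n → ℝ, Comonotone' x x' → h (x + x') = h x + h x')
    (hcont : Continuous h) :
    ∀ r : ℝ, 0 < r → ∀ x : Fin n → ℝ,
      h (fun i => r * x i) = r * h x := by
  intro r hr x
  have hray : ∀ s t : ℝ, 0 ≤ s → 0 ≤ t → h ((s + t) • x) = h (s • x) + h (t • x) :=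
    fun s t hs ht => by rw [add_smul, hadd _ _ (comonotone'_smul_smul hs ht x)]
  have hlin := Continuous.eq_smul_apply_one_of_add_of_nonneg (g := fun t => h (t • x))
    (by fun_prop) hray hr.le
  rw [one_smul] at hlin
  exact hlin

/-- A comonotonically additive continuous function is positively
homogeneous. -/
theorem comonotoneAdditive_continuous_posHom {n : ℕ} (hn : 1 ≤ n)
    (h : (Fin n → ℝ) → ℝ)
    (hadd : ∀ x x' : Fin n → ℝ, Comonotone' x x' → h (x + x') = h x + h x')
    (hcont : Continuous h) :
    ∀ r : ℝ, 0 < r → ∀ x : Fin n → ℝ,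
      h (fun i => r * x i) = r * h x :=
  comonotoneAdditive_continuous_posHom_general h hadd hcont
end

section
/- Let n ≥ 1 and let h : ℝ^n → ℝ be comonotonically additive and satisfy h(r x) = r h(x) for all r > 0 and x ∈ ℝ^n. Then h = C_v, the signed Choquet integral with respect to the signed capacity v on [n] defined by v(S) = h(1_S), where 1_S is the characteristic vector of S ⊆ [n]. -/
open Finset

lemma abel_aux (a t d : ℕ → ℝ) (hd0 : d 0 = t 0) (hd : ∀ k, d (k+1) = t (k+1) - t k) :
    ∀ m : ℕ, (∑ k ∈ Finset.range (m+1), (a k - a (k+1)) * t k) + a (m+1) * t m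
        = ∑ k ∈ Finset.range (m+1), a k * d k := by
  intro m
  induction m with
  | zero => simp [hd0]; ring
  | succ m ih =>
      rw [Finset.sum_range_succ, Finset.sum_range_succ (fun k => a k * d k), hd]
      linear_combination ih

/-- A comonotonically additive, positively homogeneous function is
the signed Choquet integral w.r.t. the signed capacity `S ↦ h(1_S)`. -/
theorem eq_signedChoquet_of_comonotoneAdditive_posHom {n : ℕ} (hn : 1 ≤ n)
    (h : (Fin n → ℝ) → ℝ)
    (hadd : ∀ x x' : Fin n → ℝ, Comonotone' x x' → h (x + x') = h x + h x')
    (hhom : ∀ r : ℝ, 0 < r → ∀ x : Fin n → ℝ, h (fun i => r * x i) = r * h x) :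
    ∀ x : Fin n → ℝ, h x = signedChoquet (fun S => h (indVec S)) x := by
  -- basic facts about h
  have h0 : h 0 = 0 := by
    have := hhom 2 (by norm_num) 0
    have e : (fun i : Fin n => (2:ℝ) * (0 : Fin n → ℝ) i) = 0 := by
      funext i; simp
    rw [e] at this; linarith
  have hconst : ∀ c : ℝ, h (fun _ => c) = c * h (fun _ => 1) := by
    intro c
    rcases lt_trichotomy c 0 with hc | hc | hc
    · have h1 : h (fun _ : Fin n => -c) = (-c) * h (fun _ => 1) := by
        have := hhom (-c) (by linarith) (fun _ => 1); simpa using this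
      have h2 : h ((fun _ : Fin n => c) + fun _ => -c) = h (fun _ => c) + h (fun _ => -c) :=
        hadd _ _ (by intro i j; simp)
      have e : ((fun _ : Fin n => c) + fun _ => -c) = 0 := by funext i; simp
      rw [e, h0] at h2; linarith
    · subst hc
      have e : (fun _ : Fin n => (0:ℝ)) = 0 := rfl
      rw [e, h0]; ring
    · have := hhom c hc (fun _ => 1); simpa using this
  intro x
  set v : Finset (Fin n) → ℝ := fun S => h (indVec S) with hv
  set π : Equiv.Perm (Fin n) := Tuple.sort x with hπ
  set A : Fin n → Finset (Fin n) := fun i => (Finset.univ.filter fun k => i ≤ k).image π with hA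
  have memA : ∀ (j : Fin n) (p : Fin n), p ∈ A j ↔ j ≤ π.symm p := by
    intro j p
    simp only [hA, Finset.mem_image, Finset.mem_filter, Finset.mem_univ, true_and]
    constructor
    · rintro ⟨k, hk, rfl⟩; simpa using hk
    · intro hj; exact ⟨π.symm p, hj, π.apply_symm_apply p⟩
  have hvempty : v ∅ = 0 := by
    have e : indVec (∅ : Finset (Fin n)) = 0 := by funext i; simp [indVec]
    simp only [hv, e, h0]
  -- the sorted values and their increments
  set t : ℕ → ℝ := fun k => if hk : k < n then x (π ⟨k, hk⟩) else 0 with ht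
  set d : ℕ → ℝ := fun k => match k with
    | 0 => t 0
    | k+1 => t (k+1) - t k with hd
  have hd0 : d 0 = t 0 := rfl
  have hdsucc : ∀ k, d (k+1) = t (k+1) - t k := fun k => rfl
  have htel : ∀ k, ∑ m ∈ Finset.range (k+1), d m = t k := by
    intro k
    induction k with
    | zero => simp [hd0]
    | succ k ih => rw [Finset.sum_range_succ, ih, hdsucc]; ring
  have hmono : ∀ m, m + 1 < n → t m ≤ t (m+1) := by
    intro m hm
    have := Tuple.monotone_sort x (a := ⟨m, by omega⟩) (b := ⟨m+1, hm⟩) (by simp [Fin.le_def])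
    simpa [ht, dif_pos hm, dif_pos (show m < n by omega)] using this
  have hd_nonneg : ∀ j : Fin n, j.val ≠ 0 → 0 ≤ d j.val := by
    intro j hj
    obtain ⟨m, hm⟩ : ∃ m, j.val = m + 1 := ⟨j.val - 1, by omega⟩
    have : m + 1 < n := by rw [← hm]; exact j.isLt
    rw [hm, hdsucc]
    have := hmono m this; linarith
  set c : Fin n → ℝ := fun j => d j.val with hc
  set f : Fin n → (Fin n → ℝ) := fun j => fun p => c j * indVec (A j) p with hf
  -- rewrite f pointwise
  have hfval : ∀ j p, f j p = if j ≤ π.symm p then c j else 0 := by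
    intro j p
    simp only [hf, indVec, memA j p, mul_ite, mul_one, mul_zero]
  -- x is the sum of the layers
  have hx : x = ∑ j : Fin n, f j := by
    funext p
    symm
    rw [Finset.sum_apply]
    have e1 : ∀ j : Fin n,
        f j p = (fun m => if m ≤ ((π.symm p : Fin n) : ℕ) then d m else 0) (j : ℕ) := by
      intro j; simp only [hfval, Fin.le_def, hc]
    calc ∑ j : Fin n, f j p
        = ∑ j : Fin n, (fun m => if m ≤ ((π.symm p : Fin n) : ℕ) then d m else 0) (j:ℕ) :=
          Finset.sum_congr rfl fun j _ => e1 j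
      _ = ∑ m ∈ Finset.range n, if m ≤ ((π.symm p : Fin n) : ℕ) then d m else 0 :=
          Fin.sum_univ_eq_sum_range (fun m => if m ≤ ((π.symm p : Fin n) : ℕ) then d m else 0) n
      _ = ∑ m ∈ (Finset.range n).filter (fun m => m ≤ ((π.symm p : Fin n) : ℕ)), d m := by
          rw [Finset.sum_filter]
      _ = ∑ m ∈ Finset.range (((π.symm p : Fin n) : ℕ) + 1), d m := by
          congr 1
          ext m
          simp only [Finset.mem_filter, Finset.mem_range]
          have := (π.symm p).isLt; omega
      _ = t ((π.symm p : Fin n) : ℕ) := htel _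
      _ = x p := by
          rw [ht]
          simp only [dif_pos (π.symm p).isLt, Fin.eta]
          rw [π.apply_symm_apply]
  -- comonotonicity of partial sums with layers
  have hlayer : ∀ (j p q : Fin n), π.symm q ≤ π.symm p → 0 ≤ f j p - f j q := by
    intro j p q hpq
    rw [hfval, hfval]
    by_cases hq : j ≤ π.symm q
    · rw [if_pos (le_trans hq hpq), if_pos hq]; simp
    · rw [if_neg hq]
      by_cases hp : j ≤ π.symm p
      · rw [if_pos hp]
        simp only [sub_zero]
        by_cases hj : j.val = 0
        · exact absurd (by simp [Fin.le_def, hj]) hq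
        · exact hd_nonneg j hj
      · rw [if_neg hp]; simp
  have hcomon : ∀ (s : Finset (Fin n)) (j : Fin n), Comonotone' (∑ k ∈ s, f k) (f j) := by
    intro s j
    have hsum' : ∀ p q : Fin n, π.symm q ≤ π.symm p →
        0 ≤ (∑ k ∈ s, f k) p - (∑ k ∈ s, f k) q := by
      intro p q hpq
      rw [Finset.sum_apply, Finset.sum_apply, ← Finset.sum_sub_distrib]
      exact Finset.sum_nonneg fun k _ => hlayer k p q hpq
    intro p q
    rcases le_total (π.symm q) (π.symm p) with hpq | hpq
    · exact mul_nonneg (hsum' p q hpq) (hlayer j p q hpq)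
    · nlinarith [mul_nonneg (hsum' q p hpq) (hlayer j q p hpq)]
  -- additivity over the layer decomposition
  have hadditive : ∀ s : Finset (Fin n), h (∑ k ∈ s, f k) = ∑ k ∈ s, h (f k) := by
    intro s
    induction s using Finset.induction with
    | empty => simpa using h0
    | @insert j s hj ih =>
        rw [Finset.sum_insert hj, Finset.sum_insert hj, ← ih]
        rw [hadd _ _ (fun p q => by
          have h1 := hcomon s j p q
          have h2 := mul_comm ((∑ k ∈ s, f k) p - (∑ k ∈ s, f k) q) (f j p - f j q)
          linarith)]
  -- value of h on each layer
  have hfj : ∀ j : Fin n, h (f j) = c j * v (A j) := by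
    intro j
    by_cases hj : j.val = 0
    · have hAuniv : A j = Finset.univ := by
        ext p; simp [memA, Fin.le_def, hj]
      have e1 : f j = fun _ => c j := by
        funext p; simp [hf, hAuniv, indVec]
      have e2 : indVec (Finset.univ : Finset (Fin n)) = fun _ => (1:ℝ) := by
        funext p; simp [indVec]
      rw [e1, hconst, hAuniv, hv]
      simp [e2]
    · rcases eq_or_lt_of_le (hd_nonneg j hj) with hcz | hcz
      · have e1 : f j = 0 := by funext p; simp [hf, hc, ← hcz]
        rw [e1, h0, show c j = 0 from hcz.symm]; ring
      · have := hhom (c j) hcz (indVec (A j))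
        exact this
  -- the algebraic (Abel summation) side
  set a : ℕ → ℝ := fun m => if hm : m < n then v (A ⟨m, hm⟩) else 0 with ha
  have hva : ∀ i : Fin n, v (A i) = a i.val := by
    intro i; rw [ha]; simp [i.isLt]
  have hvB : ∀ i : Fin n,
      v ((Finset.univ.filter fun k => i < k).image π) = a (i.val + 1) := by
    intro i
    by_cases hm : i.val + 1 < n
    · have e : (Finset.univ.filter fun k => i < k) =
          (Finset.univ.filter fun k => (⟨i.val + 1, hm⟩ : Fin n) ≤ k) := by
        ext k
        simp only [Finset.mem_filter, Finset.mem_univ, true_and, Fin.lt_def, Fin.le_def]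
        omega
      have e2 : a (i.val + 1) = v (A ⟨i.val + 1, hm⟩) := by
        have e3 : a (i.val + 1)
            = if hm' : i.val + 1 < n then v (A ⟨i.val + 1, hm'⟩) else 0 := rfl
        rw [e3, dif_pos hm]
      rw [e2, e]
    · have e : (Finset.univ.filter fun k => i < k) = (∅ : Finset (Fin n)) := by
        ext k
        simp only [Finset.mem_filter, Finset.mem_univ, true_and, Finset.notMem_empty,
          iff_false, Fin.lt_def]
        have := k.isLt; omega
      have e2 : a (i.val + 1) = 0 := by
        have e3 : a (i.val + 1)
            = if hm' : i.val + 1 < n then v (A ⟨i.val + 1, hm'⟩) else 0 := rfl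
        rw [e3, dif_neg hm]
      rw [e, Finset.image_empty, hvempty, e2]
  have hxt : ∀ i : Fin n, x (π i) = t i.val := by
    intro i; rw [ht]; simp [i.isLt]
  -- put everything together
  obtain ⟨m, rfl⟩ : ∃ m, n = m + 1 := ⟨n - 1, by omega⟩
  have habel := abel_aux a t d hd0 hdsucc m
  have ham : a (m+1) = 0 := by rw [ha]; simp
  rw [ham, zero_mul, add_zero] at habel
  calc h x = h (∑ j, f j) := by rw [← hx]
    _ = ∑ j, h (f j) := hadditive Finset.univ
    _ = ∑ j, c j * v (A j) := Finset.sum_congr rfl fun j _ => hfj j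
    _ = ∑ j : Fin (m+1), (fun k => a k * d k) (j : ℕ) := by
        apply Finset.sum_congr rfl
        intro j _
        rw [hva, hc]; ring
    _ = ∑ k ∈ Finset.range (m+1), a k * d k := Fin.sum_univ_eq_sum_range (fun k => a k * d k) (m+1)
    _ = ∑ k ∈ Finset.range (m+1), (a k - a (k+1)) * t k := habel.symm
    _ = ∑ i : Fin (m+1), (fun k => (a k - a (k+1)) * t k) (i : ℕ) :=
        (Fin.sum_univ_eq_sum_range (fun k => (a k - a (k+1)) * t k) (m+1)).symm
    _ = signedChoquet v x := by
        rw [signedChoquet, choquetSum]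
        apply Finset.sum_congr rfl
        intro i _
        show (a ↑i - a (↑i + 1)) * t ↑i =
          (v ((Finset.univ.filter fun k => i ≤ k).image ⇑π) -
            v ((Finset.univ.filter fun k => i < k).image ⇑π)) * x (π i)
        rw [hvB, hxt]
        have : v ((Finset.univ.filter fun k => i ≤ k).image ⇑π) = v (A i) := rfl
        rw [this, hva]
end

section
/- Let n ≥ 1, let T ⊆ [n] be nonempty, and let f : ℝ^n → ℝ satisfy: (a) f(x) = 0 whenever x_i = 0 for some i ∈ T; and (b) f(r x + s·1_{[n]}) = r f(x) + s for all r > 0, s ∈ ℝ, and x ∈ ℝ^n, where 1_{[n]} = (1,…,1). Then f(x) = min_{i ∈ T} x_i for all x ∈ ℝ^n. -/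
open Finset

theorem eq_min_of_vanishing_and_affine_general {n : ℕ}
    (T : Finset (Fin n)) (hT : T.Nonempty) (f : (Fin n → ℝ) → ℝ)
    (hzero : ∀ x : Fin n → ℝ, (∃ i ∈ T, x i = 0) → f x = 0)
    (haff : ∀ r : ℝ, 0 < r → ∀ s : ℝ, ∀ x : Fin n → ℝ,
      f (fun i => r * x i + s) = r * f x + s) :
    ∀ x : Fin n → ℝ, f x = T.inf' hT x := by
  intro x
  obtain ⟨i, hi, hxi⟩ := exists_mem_eq_inf' hT x
  have hshift := haff 1 one_pos (-T.inf' hT x) x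
  have hvanish : f (fun j => 1 * x j + -T.inf' hT x) = 0 :=
    hzero _ ⟨i, hi, by simp [hxi]⟩
  linarith

/-- A function vanishing whenever some coordinate indexed by `T`
is zero, and meaningful w.r.t. interval scales, is the minimum over `T`. -/
theorem eq_min_of_vanishing_and_affine {n : ℕ} (hn : 1 ≤ n)
    (T : Finset (Fin n)) (hT : T.Nonempty) (f : (Fin n → ℝ) → ℝ)
    (hzero : ∀ x : Fin n → ℝ, (∃ i ∈ T, x i = 0) → f x = 0)
    (haff : ∀ r : ℝ, 0 < r → ∀ s : ℝ, ∀ x : Fin n → ℝ,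
      f (fun i => r * x i + s) = r * f x + s) :
    ∀ x : Fin n → ℝ, f x = T.inf' hT x :=
  eq_min_of_vanishing_and_affine_general T hT f hzero haff
end

section
/- Let n ≥ 2 and, for each signed capacity v on [n], define f_v : ℝ^n → ℝ by f_v(x) = Σ_{∅ ≠ T ⊆ [n]} m_v(T)·(1/|T|)·Σ_{i ∈ T} x_i, where m_v is the Möbius transform of v. Then this family satisfies condition (i) (there exist functions g_T : ℝ^n → ℝ, T ⊆ [n], with f_v = Σ_{T ⊆ [n]} v(T)·g_T for all v) and condition (iii) (f_{v_S}(r x + s·1_{[n]}) = r·f_{v_S}(x) + s for every S ⊆ [n], r > 0, s ∈ ℝ, x ∈ ℝ^n), but it fails condition (ii): there exist a nonempty S ⊆ [n] and x ∈ ℝ^n with x_i = 0 for some i ∈ S and f_{v_S}(x) ≠ 0. -/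
open Finset

/-- The family of Möbius-weighted arithmetic means:
`f_v(x) = ∑_{∅ ≠ T ⊆ [n]} m_v(T) (1/|T|) ∑_{i ∈ T} x_i`. -/
noncomputable def wamFamily {n : ℕ} (v : Finset (Fin n) → ℝ) (x : Fin n → ℝ) : ℝ :=
  ∑ T ∈ Finset.univ.powerset.filter (fun T : Finset (Fin n) => T.Nonempty),
    mobius v T * ((T.card : ℝ)⁻¹ * ∑ i ∈ T, x i)

/-
The Möbius transform of the unanimity game `v_S` is the indicator of `S`, so `f_{v_S}` is the
arithmetic mean over `S`. A mean commutes with positive affine maps, which gives (iii), but a mean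
over at least two coordinates need not vanish when one of them does, which breaks (ii). Condition
(i) is linearity of the Möbius transform: exchanging the two sums in `f_v` collects the
coefficient of each `v(U)`.
-/

open scoped BigOperators

lemma sum_superset_neg_one_pow_card_sub {α R : Type*} [DecidableEq α] [Ring R]
    {S T : Finset α} (hST : S ⊆ T) :
    ∑ U ∈ T.powerset with S ⊆ U, (-1 : R) ^ (#T - #U) = if T = S then 1 else 0 := by
  have hcompl : ∑ U ∈ T.powerset with S ⊆ U, (-1 : R) ^ (#T - #U) =
      ∑ W ∈ (T \ S).powerset, (-1 : R) ^ #W := by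
    refine sum_nbij' (T \ ·) (T \ ·) ?_ ?_ ?_ ?_ ?_
    · intro U hU
      simp only [mem_filter, mem_powerset] at hU ⊢
      exact sdiff_subset_sdiff le_rfl hU.2
    · intro W hW
      simp only [mem_filter, mem_powerset] at hW ⊢
      exact ⟨sdiff_subset, by grind⟩
    · intro U hU
      simp only [mem_filter, mem_powerset] at hU
      exact Finset.sdiff_sdiff_eq_self hU.1
    · intro W hW
      simp only [mem_powerset] at hW
      exact Finset.sdiff_sdiff_eq_self (hW.trans sdiff_subset)
    · intro U hU
      simp only [mem_filter, mem_powerset] at hU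
      rw [card_sdiff_of_subset hU.1]
  have hempty : T \ S = ∅ ↔ T = S :=
    sdiff_eq_empty_iff_subset.trans ⟨(·.antisymm hST), (·.le)⟩
  have hcast := congrArg (Int.cast : ℤ → R) (sum_powerset_neg_one_pow_card (x := T \ S))
  simp only [Int.cast_sum, Int.cast_pow, Int.cast_neg, Int.cast_one, apply_ite (Int.cast : ℤ → R),
    Int.cast_zero] at hcast
  rw [hcompl, hcast]
  exact if_congr hempty rfl rfl

lemma mobius_unanimity {n : ℕ} (S T : Finset (Fin n)) :
    mobius (unanimity S) T = if T = S then 1 else 0 := by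
  simp only [mobius, unanimity, mul_ite, mul_one, mul_zero]
  rw [← sum_filter]
  by_cases hST : S ⊆ T
  · exact sum_superset_neg_one_pow_card_sub hST
  · rw [if_neg (by rintro rfl; exact hST le_rfl), sum_eq_zero]
    intro U hU
    simp only [mem_filter, mem_powerset] at hU
    exact absurd (hU.2.trans hU.1) hST

lemma wamFamily_unanimity {n : ℕ} {S : Finset (Fin n)} (hS : S.Nonempty) (x : Fin n → ℝ) :
    wamFamily (unanimity S) x = 𝔼 i ∈ S, x i := by
  rw [wamFamily, sum_eq_single_of_mem S (by simpa using hS), expect_eq_sum_div_card, div_eq_inv_mul]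
  · simp [mobius_unanimity]
  · intro T _ hT
    simp [mobius_unanimity, hT]

noncomputable def wamBasis {n : ℕ} (U : Finset (Fin n)) (x : Fin n → ℝ) : ℝ :=
  ∑ T ∈ univ.powerset with T.Nonempty ∧ U ⊆ T,
    (-1 : ℝ) ^ (#T - #U) * ((#T : ℝ)⁻¹ * ∑ i ∈ T, x i)

lemma wamFamily_eq_sum_wamBasis {n : ℕ} (v : Finset (Fin n) → ℝ) (x : Fin n → ℝ) :
    wamFamily v x = ∑ U, v U * wamBasis U x := by
  have hexpand : wamFamily v x = ∑ T ∈ univ.powerset with T.Nonempty, ∑ U ∈ T.powerset,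
      v U * ((-1 : ℝ) ^ (#T - #U) * ((#T : ℝ)⁻¹ * ∑ i ∈ T, x i)) :=
    sum_congr rfl fun T _ => by rw [mobius, sum_mul]; exact sum_congr rfl fun U _ => by ring
  simp only [hexpand, wamBasis, mul_sum]
  refine sum_comm' fun T U => ?_
  simp only [mem_filter, mem_powerset, subset_univ, true_and, mem_univ, and_true]

/-- the weighted arithmetic mean family satisfies conditions (i)
and (iii) of the axiomatization but fails condition (ii). -/
theorem wamFamily_i_iii_not_ii {n : ℕ} (hn : 2 ≤ n) :
    (∃ g : Finset (Fin n) → (Fin n → ℝ) → ℝ,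
        ∀ v : Finset (Fin n) → ℝ, v ∅ = 0 → ∀ x : Fin n → ℝ,
          wamFamily v x = ∑ T : Finset (Fin n), v T * g T x) ∧
    (∀ S : Finset (Fin n), S.Nonempty → ∀ r : ℝ, 0 < r → ∀ s : ℝ,
        ∀ x : Fin n → ℝ,
          wamFamily (unanimity S) (fun i => r * x i + s) =
            r * wamFamily (unanimity S) x + s) ∧
    (∃ S : Finset (Fin n), S.Nonempty ∧ ∃ x : Fin n → ℝ,
        (∃ i ∈ S, x i = 0) ∧ wamFamily (unanimity S) x ≠ 0) := by
  refine ⟨⟨wamBasis, fun v _ x => wamFamily_eq_sum_wamBasis v x⟩, ?_, ?_⟩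
  · intro S hS r _ s x
    rw [wamFamily_unanimity hS, wamFamily_unanimity hS, expect_add_distrib, expect_const hS,
      mul_expect]
  · obtain ⟨i, j, hij⟩ :=
      Fintype.exists_pair_of_one_lt_card (α := Fin n) (by rw [Fintype.card_fin]; omega)
    have huniv : (univ : Finset (Fin n)).Nonempty := ⟨i, mem_univ i⟩
    refine ⟨univ, huniv, Pi.single j 1, ⟨i, mem_univ i, by simp [hij]⟩, ?_⟩
    rw [wamFamily_unanimity huniv, expect_eq_sum_div_card, sum_pi_single' j 1]
    simpa using (by omega : n ≠ 0)
end
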